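/- arXiv:1211.2625 — 3 statements merged into one kernel-verified Lean document; each statement's English description precedes it below -/
import Mathlib

section
/- Let R be a noetherian integral domain, let f_1,…,f_n, f ∈ R with I = (f_1,…,f_n) ≠ 0, let A = R[T_1,…,T_n]/(f_1T_1+⋯+f_nT_n+f) be the forcing algebra, let H = V(𝔭) ⊆ Spec A be the horizontal component, and let V_j = V(𝔮_j A), j ∈ J, be the vertical components, i.e. the closed sets of the minimal primes of A other than the image of 𝔭. Then Spec A is connected if and only if H intersects every connected component of the union ⋃_{j∈J} V_j. -/
open MvPolynomial

/-- The forcing equation `h = f_1T_1+⋯+f_nT_n+f₀` in `B = R[T_1,…,T_n]`. -/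
noncomputable abbrev forcingPoly (R : Type*) [CommRing R] (n : ℕ) (f : Fin n → R) (f₀ : R) :
    MvPolynomial (Fin n) R :=
  (∑ i : Fin n, C (f i) * X i) + C f₀

/-- The horizontal prime `𝔭 = B ∩ (h)·Q(R)[T_1,…,T_n]`, i.e. the contraction to
`B = R[T_1,…,T_n]` of the ideal generated by `h` in `Q(R)[T_1,…,T_n]`. -/
noncomputable abbrev horizontalPrime (R : Type*) [CommRing R] [IsDomain R]
    (n : ℕ) (f : Fin n → R) (f₀ : R) : Ideal (MvPolynomial (Fin n) R) :=
  Ideal.comap (MvPolynomial.map (algebraMap R (FractionRing R)))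
    (Ideal.span {MvPolynomial.map (algebraMap R (FractionRing R)) (forcingPoly R n f f₀)})

/-- The forcing algebra `A = B/(h)`. -/
abbrev ForcingAlgebra (R : Type*) [CommRing R] (n : ℕ) (f : Fin n → R) (f₀ : R) :=
  MvPolynomial (Fin n) R ⧸ Ideal.span {forcingPoly R n f f₀}


open Set TopologicalSpace

lemma isOpen_connectedComponent_of_noetherian {α : Type*} [TopologicalSpace α]
    [NoetherianSpace α] (x : α) : IsOpen (connectedComponent x) := by
  have hfin := NoetherianSpace.finite_irreducibleComponents (α := α)
  have key : ∀ Z ∈ irreducibleComponents α,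
      Z ⊆ connectedComponent x ∨ Z ∩ connectedComponent x = ∅ := by
    intro Z hZ
    by_cases h : (Z ∩ connectedComponent x).Nonempty
    · left
      obtain ⟨y, hyZ, hyC⟩ := h
      have h2 : Z ⊆ connectedComponent y :=
        hZ.1.isConnected.isPreconnected.subset_connectedComponent hyZ
      rwa [← connectedComponent_eq hyC] at h2
    · right; exact Set.not_nonempty_iff_eq_empty.mp h
  have hcompl : (connectedComponent x)ᶜ =
      ⋃ Z ∈ {Z ∈ irreducibleComponents α | ¬ Z ⊆ connectedComponent x}, Z := by
    ext y
    simp only [Set.mem_compl_iff, Set.mem_iUnion, Set.mem_setOf_eq, exists_prop]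
    constructor
    · intro hy
      exact ⟨irreducibleComponent y,
        ⟨irreducibleComponent_mem_irreducibleComponents y,
          fun hsub => hy (hsub mem_irreducibleComponent)⟩, mem_irreducibleComponent⟩
    · rintro ⟨Z, ⟨hZ, hns⟩, hyZ⟩ hyC
      rcases key Z hZ with h | h
      · exact hns h
      · exact Set.eq_empty_iff_forall_notMem.mp h y ⟨hyZ, hyC⟩
  rw [← isClosed_compl_iff, hcompl]
  exact Set.Finite.isClosed_biUnion (hfin.subset (Set.sep_subset _ _))
    fun Z hZ => isClosed_of_mem_irreducibleComponents Z hZ.1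

lemma topo_main {X : Type*} [TopologicalSpace X] [NoetherianSpace X]
    {H U : Set X} (hcover : H ∪ U = Set.univ) (hHc : IsClosed H) (hUc : IsClosed U)
    (hH : IsConnected H) :
    ConnectedSpace X ↔ ∀ x ∈ U, (H ∩ connectedComponentIn U x).Nonempty := by
  constructor
  · intro hX x hx
    by_contra hne
    rw [Set.not_nonempty_iff_eq_empty] at hne
    set C := connectedComponentIn U x with hC
    have hCim : C = Subtype.val '' connectedComponent (⟨x, hx⟩ : U) :=
      connectedComponentIn_eq_image hx
    have hclX : Topology.IsClosedEmbedding ((↑) : U → X) :=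
      hUc.isClosedEmbedding_subtypeVal
    have hCcl : IsClosed C := by
      rw [hCim]; exact hclX.isClosedMap _ isClosed_connectedComponent
    have hCop : IsOpen C := by
      rw [← isClosed_compl_iff]
      have h1 : IsClosed (Subtype.val '' (connectedComponent (⟨x, hx⟩ : U))ᶜ) :=
        hclX.isClosedMap _ (isOpen_connectedComponent_of_noetherian _).isClosed_compl
      have h2 : Cᶜ = H ∪ Subtype.val '' (connectedComponent (⟨x, hx⟩ : U))ᶜ := by
        ext y
        simp only [Set.mem_compl_iff, Set.mem_union, Set.mem_image]
        constructor
        · intro hy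
          by_cases hyH : y ∈ H
          · exact Or.inl hyH
          · have hyU : y ∈ U := by
              have := hcover.symm ▸ Set.mem_univ y
              rcases (Set.mem_union ..).mp (hcover ▸ Set.mem_univ y) with h | h
              · exact absurd h hyH
              · exact h
            refine Or.inr ⟨⟨y, hyU⟩, ?_, rfl⟩
            intro hmem
            exact hy (hCim ▸ ⟨⟨y, hyU⟩, hmem, rfl⟩)
        · rintro (hyH | ⟨z, hz, rfl⟩) hyC
          · exact Set.eq_empty_iff_forall_notMem.mp hne y ⟨hyH, hyC⟩
          · rw [hCim] at hyC
            obtain ⟨w, hw, hweq⟩ := hyC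
            have : w = z := Subtype.val_injective hweq
            exact hz (this ▸ hw)
      rw [h2]
      exact hHc.union h1
    have hCne : C.Nonempty := ⟨x, mem_connectedComponentIn hx⟩
    have := hX.toPreconnectedSpace
    rcases isClopen_iff.mp ⟨hCcl, hCop⟩ with h | h
    · exact Set.not_nonempty_empty (h ▸ hCne)
    · obtain ⟨p, hp⟩ := hH.nonempty
      have : p ∈ C := h ▸ Set.mem_univ p
      exact Set.eq_empty_iff_forall_notMem.mp hne p ⟨hp, this⟩
  · intro hmeet
    obtain ⟨x₀, hx₀⟩ := hH.nonempty
    have hpre : IsPreconnected (Set.univ : Set X) := by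
      have := isPreconnected_sUnion x₀
        (insert H {t | ∃ x ∈ U, t = H ∪ connectedComponentIn U x})
        (by rintro s (rfl | ⟨x, hx, rfl⟩)
            · exact hx₀
            · exact Or.inl hx₀)
        (by rintro s (rfl | ⟨x, hx, rfl⟩)
            · exact hH.isPreconnected
            · obtain ⟨p, hpH, hpC⟩ := hmeet x hx
              exact hH.isPreconnected.union p hpH hpC isPreconnected_connectedComponentIn)
      have heq : ⋃₀ (insert H {t | ∃ x ∈ U, t = H ∪ connectedComponentIn U x}) = Set.univ := by
        apply Set.eq_univ_of_univ_subset
        intro y _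
        rcases (Set.mem_union ..).mp (hcover ▸ Set.mem_univ y) with h | h
        · exact ⟨H, Set.mem_insert _ _, h⟩
        · exact ⟨H ∪ connectedComponentIn U y, Set.mem_insert_iff.mpr
            (Or.inr ⟨y, h, rfl⟩), Or.inr (mem_connectedComponentIn h)⟩
      rwa [heq] at this
    exact { toPreconnectedSpace := ⟨hpre⟩, toNonempty := ⟨x₀⟩ }

open MvPolynomial

lemma prime_X_mv {K : Type*} [CommRing K] [IsDomain K] {n : ℕ} (i : Fin n) :
    Prime (X i : MvPolynomial (Fin n) K) := by
  cases n with
  | zero => exact i.elim0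
  | succ m =>
    let e := (renameEquiv K (Equiv.swap i 0)).trans (finSuccEquiv K m)
    rw [← MulEquiv.prime_iff e.toMulEquiv]
    have he : e (X i) = Polynomial.X := by
      simp [e, AlgEquiv.trans_apply, renameEquiv_apply, rename_X,
        Equiv.swap_apply_left, finSuccEquiv_X_zero]
    rw [show e.toMulEquiv (X i) = e (X i) from rfl, he]
    exact Polynomial.prime_X

lemma prime_linear {K : Type*} [Field K] {n : ℕ} (a : Fin n → K) (a₀ : K)
    {i : Fin n} (hai : a i ≠ 0) :
    Prime ((∑ j : Fin n, C (a j) * X j) + C a₀ : MvPolynomial (Fin n) K) := by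
  set u : MvPolynomial (Fin n) K :=
    (∑ j ∈ Finset.univ.erase i, C (a j) * X j) + C a₀ with hu
  have hg : (∑ j : Fin n, C (a j) * X j) + C a₀ = C (a i) * X i + u := by
    rw [hu, ← Finset.add_sum_erase _ _ (Finset.mem_univ i)]
    ring
  set s : Fin n → MvPolynomial (Fin n) K :=
    fun j => if j = i then C (a i)⁻¹ * (X i - u) else X j with hs
  set t : Fin n → MvPolynomial (Fin n) K :=
    fun j => if j = i then C (a i) * X i + u else X j with ht
  have hsi : s i = C (a i)⁻¹ * (X i - u) := if_pos rfl
  have hti : t i = C (a i) * X i + u := if_pos rfl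
  have hsj : ∀ j, j ≠ i → s j = X j := fun j hj => if_neg hj
  have htj : ∀ j, j ≠ i → t j = X j := fun j hj => if_neg hj
  have haev : ∀ v : Fin n → MvPolynomial (Fin n) K, (∀ j, j ≠ i → v j = X j) →
      aeval v u = u := by
    intro v hv
    rw [hu]
    simp only [map_add, map_sum, map_mul, aeval_C, aeval_X, algebraMap_eq]
    congr 1
    refine Finset.sum_congr rfl fun j hj => ?_
    rw [hv j (Finset.mem_erase.mp hj).1]
  have hCC : (C (a i) : MvPolynomial (Fin n) K) * C (a i)⁻¹ = 1 := by
    rw [← C_mul, mul_inv_cancel₀ hai, C_1]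
  have hCC' : (C (a i)⁻¹ : MvPolynomial (Fin n) K) * C (a i) = 1 := by
    rw [← C_mul, inv_mul_cancel₀ hai, C_1]
  have h1 : (aeval s).comp (aeval t) = AlgHom.id K (MvPolynomial (Fin n) K) := by
    apply algHom_ext
    intro j
    by_cases hj : j = i
    · subst hj
      rw [AlgHom.comp_apply, aeval_X, hti, map_add, map_mul, aeval_C, algebraMap_eq,
        aeval_X, hsi, haev s hsj, ← mul_assoc, hCC, one_mul, AlgHom.id_apply]
      ring
    · rw [AlgHom.comp_apply, aeval_X, htj j hj, aeval_X, hsj j hj, AlgHom.id_apply]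
  have h2 : (aeval t).comp (aeval s) = AlgHom.id K (MvPolynomial (Fin n) K) := by
    apply algHom_ext
    intro j
    by_cases hj : j = i
    · subst hj
      rw [AlgHom.comp_apply, aeval_X, hsi, map_mul, map_sub, aeval_C, algebraMap_eq,
        aeval_X, hti, haev t htj, AlgHom.id_apply]
      rw [show C (a j) * X j + u - u = C (a j) * X j by ring, ← mul_assoc, hCC', one_mul]
    · rw [AlgHom.comp_apply, aeval_X, hsj j hj, aeval_X, htj j hj, AlgHom.id_apply]
  let e : MvPolynomial (Fin n) K ≃ₐ[K] MvPolynomial (Fin n) K :=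
    AlgEquiv.ofAlgHom (aeval s) (aeval t) h1 h2
  rw [← MulEquiv.prime_iff e.toMulEquiv]
  have he : e ((∑ j : Fin n, C (a j) * X j) + C a₀) = X i := by
    show (aeval s) _ = X i
    rw [hg, map_add, map_mul, aeval_C, aeval_X, algebraMap_eq,
      haev s hsj, hsi, ← mul_assoc, hCC, one_mul]
    ring
  rw [show e.toMulEquiv _ = e _ from rfl, he]
  exact prime_X_mv i
/-- Theorem `connectedcomponents`: Let `R` be a noetherian domain,
`h = f_1T_1+⋯+f_nT_n+f₀` a forcing equation with `(f_1,…,f_n) ≠ 0` and `A = B/(h)` the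
forcing algebra. Let `H = V(𝔭)` be the horizontal component of `Spec A` and let the
vertical components be the vanishing sets of the minimal primes of `A` other than the
image of `𝔭`. Then `Spec A` is connected iff `H` meets every connected component of the
union of the vertical components. -/
theorem forcing_algebra_connected_iff_horizontal_meets_vertical_components
    (R : Type*) [CommRing R] [IsDomain R] [IsNoetherianRing R]
    (n : ℕ) (f : Fin n → R) (f₀ : R) (hf : ∃ i, f i ≠ 0) :
    let A := ForcingAlgebra R n f f₀
    let π := Ideal.Quotient.mk (Ideal.span {forcingPoly R n f f₀})
    let H : Set (PrimeSpectrum A) :=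
      PrimeSpectrum.zeroLocus ((Ideal.map π (horizontalPrime R n f f₀) : Ideal A) : Set A)
    let U : Set (PrimeSpectrum A) :=
      ⋃ q ∈ {q : Ideal A | q ∈ minimalPrimes A ∧
          q ≠ Ideal.map π (horizontalPrime R n f f₀)},
        PrimeSpectrum.zeroLocus (q : Set A)
    (ConnectedSpace (PrimeSpectrum A) ↔
      ∀ x ∈ U, (H ∩ connectedComponentIn U x).Nonempty) := by
  intro A π H U
  obtain ⟨i, hfi⟩ := hf
  set K := FractionRing R
  set φ := algebraMap R K with hφ
  have hai : φ (f i) ≠ 0 :=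
    (map_ne_zero_iff φ (IsFractionRing.injective R K)).mpr hfi
  have hmap : MvPolynomial.map φ (forcingPoly R n f f₀) =
      (∑ j : Fin n, C (φ (f j)) * X j) + C (φ f₀) := by
    simp [forcingPoly, map_add, map_sum, map_mul, map_C, map_X]
  have hgprime : Prime (MvPolynomial.map φ (forcingPoly R n f f₀)) := by
    rw [hmap]; exact prime_linear _ _ hai
  have hspan : (Ideal.span {MvPolynomial.map φ (forcingPoly R n f f₀)}).IsPrime :=
    (Ideal.span_singleton_prime hgprime.ne_zero).mpr hgprime
  haveI hp : (horizontalPrime R n f f₀).IsPrime := hspan.comap _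
  have hle : Ideal.span {forcingPoly R n f f₀} ≤ horizontalPrime R n f f₀ := by
    rw [Ideal.span_le, Set.singleton_subset_iff]
    exact Ideal.mem_comap.mpr (Ideal.subset_span (Set.mem_singleton _))
  haveI hPprime : (Ideal.map π (horizontalPrime R n f f₀)).IsPrime :=
    Ideal.map_isPrime_of_surjective Ideal.Quotient.mk_surjective
      (by rw [Ideal.mk_ker]; exact hle)
  have hHcl : IsClosed H := PrimeSpectrum.isClosed_zeroLocus _
  have hHconn : IsConnected H := by
    refine IsIrreducible.isConnected ?_
    refine (PrimeSpectrum.isIrreducible_zeroLocus_iff _).mpr ?_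
    rwa [hPprime.radical]
  have hSfin : {q : Ideal A | q ∈ minimalPrimes A ∧
      q ≠ Ideal.map π (horizontalPrime R n f f₀)}.Finite :=
    (minimalPrimes.finite_of_isNoetherianRing A).subset fun q hq => hq.1
  have hUcl : IsClosed U :=
    Set.Finite.isClosed_biUnion hSfin fun q _ => PrimeSpectrum.isClosed_zeroLocus _
  have hcover : H ∪ U = Set.univ := by
    apply Set.eq_univ_of_forall
    intro P'
    haveI := P'.isPrime
    obtain ⟨q, hq, hqle⟩ := Ideal.exists_minimalPrimes_le (bot_le (a := P'.asIdeal))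
    by_cases hqP : q = Ideal.map π (horizontalPrime R n f f₀)
    · left
      rw [PrimeSpectrum.mem_zeroLocus]
      intro y hy
      exact hqle (hqP ▸ hy)
    · right
      refine Set.mem_biUnion ⟨hq, hqP⟩ ?_
      rw [PrimeSpectrum.mem_zeroLocus]
      exact fun y hy => hqle hy
  exact topo_main hcover hHcl hUcl hHconn
end

section
/- Let R be a noetherian integral domain of Krull dimension 1, let f_1,…,f_n, f ∈ R with I = (f_1,…,f_n) ≠ 0, let A = R[T_1,…,T_n]/(f_1T_1+⋯+f_nT_n+f) be the forcing algebra, let H = V(𝔭) be the horizontal component of Spec A and let V_j = V(𝔮_j A), j ∈ J, be the vertical components. Then Spec A is connected if and only if H intersects every single vertical component V_j. -/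
open MvPolynomial

lemma linear_prime {K : Type*} [Field K] {n : ℕ} (c : Fin n → K) (c₀ : K)
    (i₀ : Fin n) (hc : c i₀ ≠ 0) :
    Prime ((∑ i : Fin n, C (c i) * X i) + C c₀ : MvPolynomial (Fin n) K) := by
  classical
  set e := Equiv.optionSubtypeNe i₀
  set D := MvPolynomial {b : Fin n // b ≠ i₀} K
  set ψ : MvPolynomial (Fin n) K ≃+* Polynomial D :=
    ((renameEquiv K e.symm).trans (optionEquivLeft K _)).toRingEquiv
  have hψX : ψ (X i₀) = Polynomial.X := by
    simp [ψ, renameEquiv_apply, rename_X, e, Equiv.optionSubtypeNe_symm_self,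
      optionEquivLeft_X_none]
  have hψX' : ∀ i (h : i ≠ i₀), ψ (X i) = Polynomial.C (X ⟨i, h⟩) := by
    intro i h
    simp [ψ, renameEquiv_apply, rename_X, e, Equiv.optionSubtypeNe_symm_of_ne h,
      optionEquivLeft_X_some]
  have hψC : ∀ a : K, ψ (C a) = Polynomial.C (C a) := by
    intro a
    simp [ψ, renameEquiv_apply, rename_C, optionEquivLeft_C]
  set d : D := (∑ i ∈ Finset.univ.erase i₀,
      if h : i = i₀ then 0 else C (c i) * X (⟨i, h⟩ : {b : Fin n // b ≠ i₀})) + C c₀ with hd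
  have key : ψ ((∑ i : Fin n, C (c i) * X i) + C c₀)
      = Polynomial.C (C (c i₀)) * Polynomial.X + Polynomial.C d := by
    rw [map_add, map_sum, hψC]
    rw [← Finset.add_sum_erase _ _ (Finset.mem_univ i₀)]
    rw [map_mul, hψC, hψX]
    have h2 : ∀ i ∈ Finset.univ.erase i₀, ψ (C (c i) * X i)
        = Polynomial.C (if h : i = i₀ then 0 else C (c i) * X (⟨i, h⟩ : {b : Fin n // b ≠ i₀})) := by
      intro i hi
      have h : i ≠ i₀ := Finset.ne_of_mem_erase hi
      rw [map_mul, hψC, hψX' i h, ← Polynomial.C_mul, dif_neg h]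
    rw [Finset.sum_congr rfl h2, hd, map_add, map_sum Polynomial.C]
    ring
  set r : D := -(C ((c i₀)⁻¹) * d) with hr
  have hu : IsUnit (Polynomial.C (C (c i₀)) : Polynomial D) :=
    ((isUnit_iff_ne_zero.mpr hc).map (C : K →+* D)).map Polynomial.C
  have h3 : (C (c i₀) : D) * r = -d := by
    rw [hr, mul_neg, ← mul_assoc, ← C_mul, mul_inv_cancel₀ hc, C_1, one_mul]
  have hfac : Polynomial.C (C (c i₀)) * Polynomial.X + Polynomial.C d
      = Polynomial.C (C (c i₀)) * (Polynomial.X - Polynomial.C r) := by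
    conv_rhs => rw [mul_sub, ← Polynomial.C_mul, h3, Polynomial.C_neg, sub_neg_eq_add]
  have hp : Prime (ψ ((∑ i : Fin n, C (c i) * X i) + C c₀)) := by
    rw [key, hfac]
    exact Associated.prime
      ⟨hu.unit, by rw [IsUnit.unit_spec, mul_comm]⟩ (Polynomial.prime_X_sub_C r)
  exact (MulEquiv.prime_iff ψ).mp hp

section Helpers
variable {R : Type*} [CommRing R] [IsDomain R] {n : ℕ}

local notation "K" => FractionRing R
local notation "φ" => MvPolynomial.map (algebraMap R (FractionRing R)) (σ := Fin n)

lemma denom_lemma (w : MvPolynomial (Fin n) K) :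
    ∃ r : R, r ≠ 0 ∧ ∃ u : MvPolynomial (Fin n) R,
      φ u = C (algebraMap R K r) * w := by
  induction w using MvPolynomial.induction_on with
  | C a =>
    obtain ⟨⟨x, s⟩, hx⟩ := IsLocalization.surj (nonZeroDivisors R) a
    refine ⟨s, nonZeroDivisors.ne_zero s.2, C x, ?_⟩
    rw [MvPolynomial.map_C, ← hx, C_mul, mul_comm]
  | add p q hp hq =>
    obtain ⟨r, hr, u, hu⟩ := hp
    obtain ⟨r', hr', u', hu'⟩ := hq
    refine ⟨r * r', mul_ne_zero hr hr', C r' * u + C r * u', ?_⟩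
    rw [map_add, map_mul, map_mul, MvPolynomial.map_C, MvPolynomial.map_C, hu, hu', map_mul]
    rw [C_mul]
    ring
  | mul_X p i hp =>
    obtain ⟨r, hr, u, hu⟩ := hp
    exact ⟨r, hr, u * X i, by rw [map_mul, MvPolynomial.map_X, hu, mul_assoc]⟩

end Helpers

section H2
variable {R : Type*} [CommRing R] [IsDomain R] {n : ℕ} (f : Fin n → R) (f₀ : R)

local notation "K" => FractionRing R
local notation "φ" => MvPolynomial.map (algebraMap R (FractionRing R)) (σ := Fin n)
local notation "B" => MvPolynomial (Fin n) R

lemma hform : φ (forcingPoly R n f f₀)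
    = (∑ i : Fin n, C (algebraMap R K (f i)) * X i) + C (algebraMap R K f₀) := by
  simp [forcingPoly, map_add, map_sum, MvPolynomial.map_C, MvPolynomial.map_X]

lemma hprime' (hf : ∃ i, f i ≠ 0) : Prime (φ (forcingPoly R n f f₀)) := by
  obtain ⟨i₀, hi₀⟩ := hf
  rw [hform]
  refine linear_prime _ _ i₀ fun h0 => hi₀ ?_
  exact (map_eq_zero_iff _ (IsFractionRing.injective R K)).mp h0

lemma hspanprime (hf : ∃ i, f i ≠ 0) : (Ideal.span {φ (forcingPoly R n f f₀)}).IsPrime :=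
  (Ideal.span_singleton_prime (hprime' f f₀ hf).ne_zero).mpr (hprime' f f₀ hf)

lemma hPprime (hf : ∃ i, f i ≠ 0) : (horizontalPrime R n f f₀).IsPrime :=
  (hspanprime f f₀ hf).comap _

lemma h_mem_P : forcingPoly R n f f₀ ∈ horizontalPrime R n f f₀ :=
  Ideal.mem_comap.mpr (Ideal.subset_span rfl)

lemma hcontract (hf : ∃ i, f i ≠ 0) : ∀ r : R, C r ∈ horizontalPrime R n f f₀ → r = 0 := by
  intro r hr
  by_contra hr0
  rw [horizontalPrime, Ideal.mem_comap, MvPolynomial.map_C,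
    Ideal.mem_span_singleton] at hr
  have h1 : IsUnit (algebraMap R K r) := isUnit_iff_ne_zero.mpr
    (fun h0 => hr0 ((map_eq_zero_iff _ (IsFractionRing.injective R K)).mp h0))
  have : IsUnit (C (algebraMap R K r) : MvPolynomial (Fin n) K) :=
    h1.map (C : K →+* MvPolynomial (Fin n) K)
  exact (hprime' f f₀ hf).not_unit (isUnit_of_dvd_unit hr this)

lemma hkey : ∀ Q : Ideal B, Q.IsPrime → forcingPoly R n f f₀ ∈ Q →
    (∀ r : R, C r ∈ Q → r = 0) → horizontalPrime R n f f₀ ≤ Q := by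
  intro Q hQ hhQ hQ0 g hg
  rw [horizontalPrime, Ideal.mem_comap, Ideal.mem_span_singleton] at hg
  obtain ⟨w, hw⟩ := hg
  obtain ⟨r, hr, u, hu⟩ := denom_lemma (R := R) w
  have : φ (C r * g) = φ (u * forcingPoly R n f f₀) := by
    rw [map_mul, map_mul, MvPolynomial.map_C, hu, hw]
    ring
  have heq : C r * g = u * forcingPoly R n f f₀ :=
    MvPolynomial.map_injective _ (IsFractionRing.injective R K) this
  have hmem : C r * g ∈ Q := heq ▸ Ideal.mul_mem_left _ u hhQ
  rcases hQ.mem_or_mem hmem with h | h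
  · exact absurd (hQ0 r h) hr
  · exact h

lemma hminP (hf : ∃ i, f i ≠ 0) : horizontalPrime R n f f₀ ∈ (Ideal.span {forcingPoly R n f f₀}).minimalPrimes := by
  constructor
  · exact ⟨hPprime f f₀ hf, (Ideal.span_singleton_le_iff_mem _).mpr (h_mem_P f f₀)⟩
  · rintro P ⟨hP, hsP⟩ hPle
    refine hkey f f₀ P hP ((Ideal.span_singleton_le_iff_mem _).mp hsP) ?_
    exact fun r hr => hcontract f f₀ hf r (hPle hr)

end H2

section H3
variable {R : Type*} [CommRing R] [IsDomain R]

lemma dim_one_max (hdim : ringKrullDim R = 1) (p : Ideal R) (hp : p.IsPrime)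
    (hp0 : p ≠ ⊥) : p.IsMaximal := by
  refine ⟨⟨hp.ne_top, fun b hb => ?_⟩⟩
  by_contra hbT
  obtain ⟨m, hm, hbm⟩ := Ideal.exists_le_maximal b hbT
  have h1 : (⊥ : Ideal R) < p := bot_lt_iff_ne_bot.mpr hp0
  have h2 : p < m := lt_of_lt_of_le hb hbm
  let c : LTSeries (PrimeSpectrum R) :=
    ⟨2, ![⟨⊥, Ideal.bot_prime⟩, ⟨p, hp⟩, ⟨m, hm.isPrime⟩], by
      intro i
      fin_cases i
      · exact (PrimeSpectrum.asIdeal_lt_asIdeal _ _).mp h1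
      · exact (PrimeSpectrum.asIdeal_lt_asIdeal _ _).mp h2⟩
  have hle := Order.LTSeries.length_le_krullDim c
  rw [show Order.krullDim (PrimeSpectrum R) = ringKrullDim R from rfl, hdim] at hle
  norm_num [c] at hle

end H3

section H4
variable {R : Type*} [CommRing R] [IsDomain R] {n : ℕ} (f : Fin n → R) (f₀ : R)

local notation "B" => MvPolynomial (Fin n) R

lemma vert_ne_bot (hf : ∃ i, f i ≠ 0) {Q : Ideal B}
    (hQ : Q ∈ (Ideal.span {forcingPoly R n f f₀}).minimalPrimes)
    (hne : Q ≠ horizontalPrime R n f f₀) : Q.comap (C : R →+* B) ≠ ⊥ := by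
  intro h0
  have hQ0 : ∀ r : R, C r ∈ Q → r = 0 := by
    intro r hr
    have : r ∈ Q.comap (C : R →+* B) := hr
    rw [h0] at this
    exact this
  have hhQ : forcingPoly R n f f₀ ∈ Q :=
    (Ideal.span_singleton_le_iff_mem _).mp hQ.1.2
  have h1 : horizontalPrime R n f f₀ ≤ Q := hkey f f₀ Q hQ.1.1 hhQ hQ0
  have h2 : Q ≤ horizontalPrime R n f f₀ := hQ.2
    ⟨hPprime f f₀ hf, (Ideal.span_singleton_le_iff_mem _).mpr (h_mem_P f f₀)⟩ h1
  exact hne (le_antisymm h2 h1)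

lemma vert_eq {Q Q' : Ideal B}
    (hQ : Q ∈ (Ideal.span {forcingPoly R n f f₀}).minimalPrimes)
    (hQ' : Q' ∈ (Ideal.span {forcingPoly R n f f₀}).minimalPrimes)
    (hc : Q.comap (C : R →+* B) = Q'.comap (C : R →+* B))
    (hmax : (Q.comap (C : R →+* B)).IsMaximal) : Q = Q' := by
  classical
  set 𝔮 : Ideal R := Q.comap (C : R →+* B) with h𝔮
  haveI : 𝔮.IsMaximal := hmax
  haveI : 𝔮.IsPrime := hmax.isPrime
  set μ : B →+* MvPolynomial (Fin n) (R ⧸ 𝔮) :=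
    (MvPolynomial.map (Ideal.Quotient.mk 𝔮) : B →+* _) with hμdef
  have hker : RingHom.ker μ = Ideal.map (C : R →+* B) 𝔮 := by
    rw [hμdef, MvPolynomial.ker_map, Ideal.mk_ker]
  have hkerQ : Ideal.map (C : R →+* B) 𝔮 ≤ Q := Ideal.map_le_iff_le_comap.mpr le_rfl
  have hkerQ' : Ideal.map (C : R →+* B) 𝔮 ≤ Q' :=
    Ideal.map_le_iff_le_comap.mpr (le_of_eq hc)
  have hhQ : forcingPoly R n f f₀ ∈ Q := (Ideal.span_singleton_le_iff_mem _).mp hQ.1.2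
  have hhQ' : forcingPoly R n f f₀ ∈ Q' := (Ideal.span_singleton_le_iff_mem _).mp hQ'.1.2
  by_cases hall : ∀ i, f i ∈ 𝔮
  · -- h lies in 𝔮·B, which is a prime containing (h), so Q = 𝔮B = Q'
    have hsum : (∑ i : Fin n, C (f i) * X i : B) ∈ Ideal.map (C : R →+* B) 𝔮 :=
      Ideal.sum_mem _ fun i _ =>
        Ideal.mul_mem_right _ _ (Ideal.mem_map_of_mem _ (hall i))
    have hf₀ : f₀ ∈ 𝔮 := by
      have hCf₀ : (C f₀ : B) ∈ Q := by
        have := Q.sub_mem hhQ (hkerQ hsum)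
        simpa [forcingPoly] using this
      exact hCf₀
    have hh : forcingPoly R n f f₀ ∈ Ideal.map (C : R →+* B) 𝔮 :=
      add_mem hsum (Ideal.mem_map_of_mem _ hf₀)
    have hprime𝔮B : (Ideal.map (C : R →+* B) 𝔮).IsPrime := by
      rw [← hker]
      exact RingHom.ker_isPrime μ
    have e1 : Q = Ideal.map (C : R →+* B) 𝔮 :=
      le_antisymm (hQ.2 ⟨hprime𝔮B, (Ideal.span_singleton_le_iff_mem _).mpr hh⟩ hkerQ) hkerQ
    have e2 : Q' = Ideal.map (C : R →+* B) 𝔮 :=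
      le_antisymm (hQ'.2 ⟨hprime𝔮B, (Ideal.span_singleton_le_iff_mem _).mpr hh⟩ hkerQ') hkerQ'
    rw [e1, e2]
  · push_neg at hall
    obtain ⟨i₀, hi₀⟩ := hall
    letI : Field (R ⧸ 𝔮) := Ideal.Quotient.field 𝔮
    have hμh : μ (forcingPoly R n f f₀)
        = (∑ i : Fin n, C ((Ideal.Quotient.mk 𝔮) (f i)) * X i)
          + C ((Ideal.Quotient.mk 𝔮) f₀) := by
      simp [hμdef, forcingPoly, map_add, map_sum, MvPolynomial.map_C, MvPolynomial.map_X]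
    have hp : Prime (μ (forcingPoly R n f f₀)) := by
      rw [hμh]
      exact linear_prime _ _ i₀ (fun h0 => hi₀ (Ideal.Quotient.eq_zero_iff_mem.mp h0))
    have hsp : (Ideal.span {μ (forcingPoly R n f f₀)}).IsPrime :=
      (Ideal.span_singleton_prime hp.ne_zero).mpr hp
    set Γ : Ideal B := Ideal.comap μ (Ideal.span {μ (forcingPoly R n f f₀)}) with hΓdef
    have hΓp : Γ.IsPrime := hsp.comap μ
    have hhΓ : forcingPoly R n f f₀ ∈ Γ := Ideal.mem_comap.mpr (Ideal.subset_span rfl)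
    have hΓle : ∀ P : Ideal B, Ideal.map (C : R →+* B) 𝔮 ≤ P →
        forcingPoly R n f f₀ ∈ P → Γ ≤ P := by
      intro P hP1 hP2 g hg
      rw [hΓdef, Ideal.mem_comap, Ideal.mem_span_singleton] at hg
      obtain ⟨w, hw⟩ := hg
      obtain ⟨u, rfl⟩ := MvPolynomial.map_surjective _ Ideal.Quotient.mk_surjective w
      have hz : μ (g - u * forcingPoly R n f f₀) = 0 := by
        rw [map_sub, map_mul, hw]
        ring
      have hm : g - u * forcingPoly R n f f₀ ∈ Ideal.map (C : R →+* B) 𝔮 := by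
        rw [← hker]; exact hz
      have : g - u * forcingPoly R n f f₀ + u * forcingPoly R n f f₀ ∈ P :=
        add_mem (hP1 hm) (Ideal.mul_mem_left _ u hP2)
      simpa using this
    have e1 : Q = Γ :=
      le_antisymm
        (hQ.2 ⟨hΓp, (Ideal.span_singleton_le_iff_mem _).mpr hhΓ⟩ (hΓle Q hkerQ hhQ))
        (hΓle Q hkerQ hhQ)
    have e2 : Q' = Γ :=
      le_antisymm
        (hQ'.2 ⟨hΓp, (Ideal.span_singleton_le_iff_mem _).mpr hhΓ⟩ (hΓle Q' hkerQ' hhQ'))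
        (hΓle Q' hkerQ' hhQ')
    rw [e1, e2]

lemma vert_comax (hdim : ringKrullDim R = 1) {Q Q' : Ideal B}
    (hQ : Q ∈ (Ideal.span {forcingPoly R n f f₀}).minimalPrimes)
    (hQ' : Q' ∈ (Ideal.span {forcingPoly R n f f₀}).minimalPrimes)
    (hne : Q ≠ Q')
    (h0 : Q.comap (C : R →+* B) ≠ ⊥) (h0' : Q'.comap (C : R →+* B) ≠ ⊥) :
    Q ⊔ Q' = ⊤ := by
  by_contra hT
  obtain ⟨M, hM, hle⟩ := Ideal.exists_le_maximal _ hT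
  have h𝔮 : (Q.comap (C : R →+* B)).IsPrime := hQ.1.1.comap _
  have h𝔮' : (Q'.comap (C : R →+* B)).IsPrime := hQ'.1.1.comap _
  have hmax : (Q.comap (C : R →+* B)).IsMaximal := dim_one_max hdim _ h𝔮 h0
  have hmax' : (Q'.comap (C : R →+* B)).IsMaximal := dim_one_max hdim _ h𝔮' h0'
  have hMC : (M.comap (C : R →+* B)).IsPrime := hM.isPrime.comap _
  have e1 : Q.comap (C : R →+* B) = M.comap (C : R →+* B) :=
    hmax.eq_of_le hMC.ne_top (Ideal.comap_mono (le_trans le_sup_left hle))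
  have e2 : Q'.comap (C : R →+* B) = M.comap (C : R →+* B) :=
    hmax'.eq_of_le hMC.ne_top (Ideal.comap_mono (le_trans le_sup_right hle))
  exact hne (vert_eq f f₀ hQ hQ' (e1.trans e2.symm) hmax)

end H4

/-- Corollary `connectedcomponentsone`: Let `R` be a noetherian domain of
Krull dimension `1`, `h = f_1T_1+⋯+f_nT_n+f₀` a forcing equation with `(f_1,…,f_n) ≠ 0`
and `A = B/(h)` the forcing algebra. Then `Spec A` is connected iff the horizontal
component `H = V(𝔭)` meets every single vertical component, i.e. every vanishing set of
a minimal prime of `A` other than the image of the horizontal prime `𝔭`. -/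
theorem forcing_algebra_dim_one_connected_iff_meets_each_vertical
    (R : Type*) [CommRing R] [IsDomain R] [IsNoetherianRing R]
    (hdim : ringKrullDim R = 1)
    (n : ℕ) (f : Fin n → R) (f₀ : R) (hf : ∃ i, f i ≠ 0) :
    let A := ForcingAlgebra R n f f₀
    let π := Ideal.Quotient.mk (Ideal.span {forcingPoly R n f f₀})
    let H : Set (PrimeSpectrum A) :=
      PrimeSpectrum.zeroLocus ((Ideal.map π (horizontalPrime R n f f₀) : Ideal A) : Set A)
    (ConnectedSpace (PrimeSpectrum A) ↔
      ∀ q ∈ minimalPrimes A, q ≠ Ideal.map π (horizontalPrime R n f f₀) →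
        (H ∩ PrimeSpectrum.zeroLocus (q : Set A)).Nonempty) := by
  intro A π H
  classical
  have hπsurj : Function.Surjective π := Ideal.Quotient.mk_surjective
  have hkerπ : RingHom.ker π = Ideal.span {forcingPoly R n f f₀} := Ideal.mk_ker
  have hminp : horizontalPrime R n f f₀ ∈ (Ideal.span {forcingPoly R n f f₀}).minimalPrimes :=
    hminP f f₀ hf
  have hcomap_pbar :
      Ideal.comap π (Ideal.map π (horizontalPrime R n f f₀)) = horizontalPrime R n f f₀ := by
    rw [Ideal.comap_map_of_surjective π hπsurj, ← RingHom.ker_eq_comap_bot, hkerπ]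
    exact sup_eq_left.mpr hminp.1.2
  haveI hPp : (horizontalPrime R n f f₀).IsPrime := hPprime f f₀ hf
  have hmapprime : (Ideal.map π (horizontalPrime R n f f₀)).IsPrime := by
    refine Ideal.map_isPrime_of_surjective hπsurj ?_
    rw [hkerπ]
    exact hminp.1.2
  have hminiff : ∀ q : Ideal A, q ∈ minimalPrimes A ↔
      Ideal.comap π q ∈ (Ideal.span {forcingPoly R n f f₀}).minimalPrimes := by
    intro q
    constructor
    · intro hq
      rw [Ideal.minimalPrimes_eq_comap]
      exact ⟨q, hq, rfl⟩
    · intro hq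
      rw [Ideal.minimalPrimes_eq_comap] at hq
      obtain ⟨q', hq', he⟩ := hq
      have heq : q' = q := by
        have h2 := congrArg (Ideal.map π) he
        rwa [Ideal.map_comap_of_surjective π hπsurj,
          Ideal.map_comap_of_surjective π hπsurj] at h2
      rwa [← heq]
  have hpbar_min : Ideal.map π (horizontalPrime R n f f₀) ∈ minimalPrimes A :=
    (hminiff _).mpr (by rw [hcomap_pbar]; exact hminp)
  set x₀ : PrimeSpectrum A := ⟨Ideal.map π (horizontalPrime R n f f₀), hmapprime⟩ with hx₀
  have hx₀H : x₀ ∈ H := (PrimeSpectrum.mem_zeroLocus _ _).mpr subset_rfl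
  -- disjointness of distinct vertical components
  have hdisj : ∀ q ∈ minimalPrimes A, ∀ q' ∈ minimalPrimes A, q ≠ q' →
      q ≠ Ideal.map π (horizontalPrime R n f f₀) →
      q' ≠ Ideal.map π (horizontalPrime R n f f₀) →
      PrimeSpectrum.zeroLocus (q : Set A) ∩ PrimeSpectrum.zeroLocus (q' : Set A) = ∅ := by
    intro q hq q' hq' hne hnp hnp'
    have h1 := (hminiff q).mp hq
    have h1' := (hminiff q').mp hq'
    have hb : Ideal.comap π q ≠ horizontalPrime R n f f₀ := by
      intro hcon
      exact hnp (by rw [← Ideal.map_comap_of_surjective π hπsurj q, hcon])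
    have hb' : Ideal.comap π q' ≠ horizontalPrime R n f f₀ := by
      intro hcon
      exact hnp' (by rw [← Ideal.map_comap_of_surjective π hπsurj q', hcon])
    have hcne : Ideal.comap π q ≠ Ideal.comap π q' := by
      intro hcon
      apply hne
      rw [← Ideal.map_comap_of_surjective π hπsurj q, ← Ideal.map_comap_of_surjective π hπsurj q',
        hcon]
    have hcomax := vert_comax f f₀ hdim h1 h1' hcne
      (vert_ne_bot f f₀ hf h1 hb) (vert_ne_bot f f₀ hf h1' hb')
    rw [Set.eq_empty_iff_forall_notMem]
    rintro x ⟨hx1, hx2⟩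
    rw [PrimeSpectrum.mem_zeroLocus] at hx1 hx2
    have hle : Ideal.comap π q ⊔ Ideal.comap π q' ≤ Ideal.comap π x.asIdeal :=
      sup_le (Ideal.comap_mono hx1) (Ideal.comap_mono hx2)
    rw [hcomax, top_le_iff] at hle
    exact (x.isPrime.comap π).ne_top hle
  constructor
  · -- connected → meets each vertical
    intro hconn q hq hne
    haveI := hconn
    by_contra hempty
    rw [Set.not_nonempty_iff_eq_empty] at hempty
    haveI : IsNoetherianRing A := inferInstance
    have hfin : ((minimalPrimes A) \ {q}).Finite :=
      (minimalPrimes.finite_of_isNoetherianRing A).subset Set.diff_subset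
    set D : Set (PrimeSpectrum A) :=
      ⋃ q' ∈ (minimalPrimes A) \ {q}, PrimeSpectrum.zeroLocus ((q' : Ideal A) : Set A) with hD
    have hDclosed : IsClosed D :=
      Set.Finite.isClosed_biUnion hfin fun _ _ => PrimeSpectrum.isClosed_zeroLocus _
    have hcover : PrimeSpectrum.zeroLocus ((q : Ideal A) : Set A) ∪ D = Set.univ := by
      rw [Set.eq_univ_iff_forall]
      intro x
      haveI := x.isPrime
      obtain ⟨q'', hq'', hle⟩ := Ideal.exists_minimalPrimes_le (bot_le : (⊥ : Ideal A) ≤ x.asIdeal)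
      by_cases hcase : q'' = q
      · left
        exact (PrimeSpectrum.mem_zeroLocus _ _).mpr (hcase ▸ hle)
      · right
        rw [hD]
        exact Set.mem_biUnion ⟨hq'', hcase⟩ ((PrimeSpectrum.mem_zeroLocus _ _).mpr hle)
    have hdisjD : PrimeSpectrum.zeroLocus ((q : Ideal A) : Set A) ∩ D = ∅ := by
      rw [Set.eq_empty_iff_forall_notMem]
      rintro x ⟨hx1, hx2⟩
      rw [hD, Set.mem_iUnion₂] at hx2
      obtain ⟨q', hq', hxq'⟩ := hx2
      by_cases hcase : q' = Ideal.map π (horizontalPrime R n f f₀)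
      · rw [hcase] at hxq'
        have : x ∈ H ∩ PrimeSpectrum.zeroLocus ((q : Ideal A) : Set A) := ⟨hxq', hx1⟩
        rw [hempty] at this
        exact this
      · have hqq' : q ≠ q' := fun hcon => hq'.2 (by rw [← hcon]; rfl)
        have : x ∈ PrimeSpectrum.zeroLocus ((q : Ideal A) : Set A) ∩
            PrimeSpectrum.zeroLocus ((q' : Ideal A) : Set A) := ⟨hx1, hxq'⟩
        rw [hdisj q hq q' hq'.1 hqq' hne hcase] at this
        exact this
    have hVq_eq : PrimeSpectrum.zeroLocus ((q : Ideal A) : Set A) = Dᶜ := by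
      ext x
      simp only [Set.mem_compl_iff]
      constructor
      · intro hx hxD
        have : x ∈ PrimeSpectrum.zeroLocus ((q : Ideal A) : Set A) ∩ D := ⟨hx, hxD⟩
        rw [hdisjD] at this
        exact this
      · intro hx
        rcases (Set.eq_univ_iff_forall.mp hcover x) with h | h
        · exact h
        · exact absurd h hx
    have hclopen : IsClopen (PrimeSpectrum.zeroLocus ((q : Ideal A) : Set A)) :=
      ⟨PrimeSpectrum.isClosed_zeroLocus _, hVq_eq ▸ hDclosed.isOpen_compl⟩
    rcases isClopen_iff.mp hclopen with hcE | hcU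
    · have : (⟨q, hq.1.1⟩ : PrimeSpectrum A) ∈ PrimeSpectrum.zeroLocus ((q : Ideal A) : Set A) :=
        (PrimeSpectrum.mem_zeroLocus _ _).mpr le_rfl
      rw [hcE] at this
      exact this
    · have : x₀ ∈ H ∩ PrimeSpectrum.zeroLocus ((q : Ideal A) : Set A) :=
        ⟨hx₀H, hcU ▸ Set.mem_univ x₀⟩
      rw [hempty] at this
      exact this
  · -- meets each vertical → connected
    intro hmeet
    have hpre : IsPreconnected (Set.univ : Set (PrimeSpectrum A)) := by
      have hUeq : (Set.univ : Set (PrimeSpectrum A)) =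
          ⋃₀ ((fun q : Ideal A => H ∪ PrimeSpectrum.zeroLocus ((q : Ideal A) : Set A)) ''
            minimalPrimes A) := by
        apply Set.eq_of_subset_of_subset
        · intro x _
          haveI := x.isPrime
          obtain ⟨q'', hq'', hle⟩ := Ideal.exists_minimalPrimes_le
            (bot_le : (⊥ : Ideal A) ≤ x.asIdeal)
          exact ⟨_, ⟨q'', hq'', rfl⟩, Or.inr ((PrimeSpectrum.mem_zeroLocus _ _).mpr hle)⟩
        · exact Set.subset_univ _
      rw [hUeq]
      apply isPreconnected_sUnion x₀
      · rintro s ⟨q, hq, rfl⟩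
        exact Or.inl hx₀H
      · rintro s ⟨q, hq, rfl⟩
        have hVpre : IsPreconnected (PrimeSpectrum.zeroLocus ((q : Ideal A) : Set A)) :=
          ((PrimeSpectrum.isIrreducible_zeroLocus_iff _).mpr
            (by rw [hq.1.1.radical]; exact hq.1.1)).2.isPreconnected
        have hHpre : IsPreconnected H :=
          ((PrimeSpectrum.isIrreducible_zeroLocus_iff _).mpr
            (by rw [hmapprime.radical]; exact hmapprime)).2.isPreconnected
        by_cases hcase : q = Ideal.map π (horizontalPrime R n f f₀)
        · exact IsPreconnected.union' ⟨x₀, hx₀H,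
            (PrimeSpectrum.mem_zeroLocus _ _).mpr (by rw [hcase])⟩ hHpre hVpre
        · exact IsPreconnected.union' (hmeet q hq hcase) hHpre hVpre
    exact { toPreconnectedSpace := ⟨hpre⟩, toNonempty := ⟨x₀⟩ }
end

section
/- Let (R, 𝔪) be a local noetherian integral domain, let f_1,…,f_n ∈ 𝔪 with I = (f_1,…,f_n) ≠ 0 and f ∈ 𝔪, let A = R[T_1,…,T_n]/(f_1T_1+⋯+f_nT_n+f) be the forcing algebra and let 𝔭 ⊆ R[T_1,…,T_n] be the horizontal prime. Then Spec A is connected if and only if 𝔭 + (f_1,…,f_n,f)R[T_1,…,T_n] is not the unit ideal of R[T_1,…,T_n]. -/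
open MvPolynomial

/-! ### Auxiliary lemmas on idempotents and connectedness -/

section Idem
variable {S : Type*} [CommRing S]

lemma FA.poly_idem (hS : ∀ e : S, IsIdempotentElem e → e = 0 ∨ e = 1) :
    ∀ e : Polynomial S, IsIdempotentElem e → e = 0 ∨ e = 1 := by
  intro e he
  have hnil : ∀ i : ℕ, i ≠ 0 → IsNilpotent (e.coeff i) := by
    intro i hi
    have hq : IsIdempotentElem (e.map (Ideal.Quotient.mk (nilradical S))) :=
      he.map (Polynomial.mapRingHom (Ideal.Quotient.mk (nilradical S)))
    set E := e.map (Ideal.Quotient.mk (nilradical S)) with hE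
    have hdeg : E.natDegree = 0 := by
      by_contra hd
      have hlt : E.natDegree < E.natDegree + E.natDegree := by omega
      have h2 := Polynomial.coeff_mul_degree_add_degree E E
      rw [hq, Polynomial.coeff_eq_zero_of_natDegree_lt hlt] at h2
      have hred : IsReduced (S ⧸ nilradical S) :=
        (Ideal.isRadical_iff_quotient_reduced _).mp (Ideal.radical_isRadical (0 : Ideal S))
      have h3 : IsNilpotent E.leadingCoeff := ⟨2, by rw [pow_two]; exact h2.symm⟩
      have h4 : E.leadingCoeff = 0 := h3.eq_zero
      rw [Polynomial.leadingCoeff_eq_zero] at h4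
      rw [h4] at hd
      simp at hd
    have hEc : E.coeff i = 0 := Polynomial.coeff_eq_zero_of_natDegree_lt (by omega)
    rw [hE, Polynomial.coeff_map] at hEc
    rw [← mem_nilradical]
    exact Ideal.Quotient.eq_zero_iff_mem.mp hEc
  have hc : IsIdempotentElem (e.coeff 0) := by
    have := congrArg (fun p => Polynomial.coeff p 0) he
    show e.coeff 0 * e.coeff 0 = e.coeff 0
    simpa [Polynomial.mul_coeff_zero] using this
  have hcube : (e - Polynomial.C (e.coeff 0)) ^ 3 = e - Polynomial.C (e.coeff 0) := by
    have hc' : Polynomial.C (e.coeff 0) * Polynomial.C (e.coeff 0) = Polynomial.C (e.coeff 0) := by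
      rw [← Polynomial.C_mul, hc]
    have he' : e * e = e := he
    linear_combination (e + 1 - 3 * Polynomial.C (e.coeff 0)) * he' +
      (3 * e - Polynomial.C (e.coeff 0) - 1) * hc'
  have hz : IsNilpotent (e - Polynomial.C (e.coeff 0)) := by
    rw [Polynomial.isNilpotent_iff]
    intro i
    rcases eq_or_ne i 0 with rfl | hi
    · simp
    · simpa [Polynomial.coeff_C, hi] using hnil i hi
  have hz0 : e - Polynomial.C (e.coeff 0) = 0 := by
    obtain ⟨k, hk⟩ := hz
    set z := e - Polynomial.C (e.coeff 0) with hzdef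
    have hodd : ∀ j : ℕ, z = z ^ (2 * j + 1) := by
      intro j
      induction j with
      | zero => simp
      | succ j ih =>
        have h1 : z ^ (2 * (j + 1) + 1) = z ^ (2 * j + 1) * z * z := by ring
        rw [h1, ← ih]
        have h2 : z * z * z = z ^ 3 := by ring
        rw [h2, hcube]
    calc z = z ^ (2 * k + 1) := hodd k
      _ = z ^ k * z ^ (k + 1) := by ring
      _ = 0 := by rw [hk, zero_mul]
  have he0 : e = Polynomial.C (e.coeff 0) := by
    rw [sub_eq_zero] at hz0; exact hz0
  rcases hS _ hc with h0 | h1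
  · left; rw [he0, h0, Polynomial.C_0]
  · right; rw [he0, h1, Polynomial.C_1]

lemma FA.mv_idem (n : ℕ) (hS : ∀ e : S, IsIdempotentElem e → e = 0 ∨ e = 1) :
    ∀ e : MvPolynomial (Fin n) S, IsIdempotentElem e → e = 0 ∨ e = 1 := by
  induction n with
  | zero =>
    intro e he
    have h2 : IsIdempotentElem ((isEmptyRingEquiv S (Fin 0)) e) := he.map _
    rcases hS _ h2 with h | h
    · left; apply (isEmptyRingEquiv S (Fin 0)).injective; rw [h, map_zero]
    · right; apply (isEmptyRingEquiv S (Fin 0)).injective; rw [h, map_one]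
  | succ m ih =>
    intro e he
    have h2 : IsIdempotentElem ((finSuccEquiv S m).toRingEquiv e) := he.map _
    rcases FA.poly_idem ih _ h2 with h | h
    · left; apply (finSuccEquiv S m).injective
      rw [show (finSuccEquiv S m) e = (finSuccEquiv S m).toRingEquiv e from rfl, h, map_zero]
    · right; apply (finSuccEquiv S m).injective
      rw [show (finSuccEquiv S m) e = (finSuccEquiv S m).toRingEquiv e from rfl, h, map_one]

lemma FA.preconnectedSpace_of_clopen {X : Type*} [TopologicalSpace X]
    (h : ∀ s : Set X, IsClopen s → s = ∅ ∨ s = Set.univ) : PreconnectedSpace X := by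
  constructor
  intro u v hu hv hcov hune hvne
  by_contra hne
  rw [Set.not_nonempty_iff_eq_empty] at hne
  have huv : u ∩ v = ∅ := by simpa using hne
  have hcompl : uᶜ = v := by
    apply Set.Subset.antisymm
    · intro x hx
      rcases hcov (Set.mem_univ x) with h1 | h1
      · exact absurd h1 hx
      · exact h1
    · intro x hx hxu
      exact Set.eq_empty_iff_forall_notMem.mp huv x ⟨hxu, hx⟩
  have hclopen : IsClopen u := ⟨isOpen_compl_iff.mp (hcompl ▸ hv), hu⟩
  rcases h u hclopen with rfl | rfl
  · simp at hune
  · rw [← hcompl] at hvne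
    simp at hvne

lemma FA.local_idem (T : Type*) [CommRing T] [IsLocalRing T] (e : T)
    (he : IsIdempotentElem e) : e = 0 ∨ e = 1 := by
  rcases IsLocalRing.isUnit_or_isUnit_one_sub_self e with h | h
  · right
    have h1 : e * e = e * 1 := by rw [mul_one]; exact he
    exact h.mul_left_cancel h1
  · left
    have h1 : (1 - e) * e = 0 := by
      have he' : e * e = e := he
      linear_combination -he'
    exact (h.mul_right_eq_zero).mp h1

lemma FA.preconn_spec (T : Type*) [CommRing T]
    (hT : ∀ e : T, IsIdempotentElem e → e = 0 ∨ e = 1) :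
    PreconnectedSpace (PrimeSpectrum T) := by
  apply FA.preconnectedSpace_of_clopen
  intro s hs
  obtain ⟨e, he, rfl⟩ := PrimeSpectrum.isClopen_iff.mp hs
  rcases hT e he with rfl | rfl
  · left; simp
  · right; simp

end Idem

/-! ### A division lemma for linear polynomials -/

section Div
variable {S S' : Type*} [CommRing S] [CommRing S']

lemma FA.div_lemma (τ : S →+* S') (hτ : Function.Injective τ) {a b : S}
    (ha : IsUnit (τ a)) :
    ∀ (k : ℕ) (p : Polynomial S) (q : Polynomial S'), p.natDegree ≤ k →
      p.map τ = q * (Polynomial.C (τ a) * Polynomial.X + Polynomial.C (τ b)) →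
      ∃ (N : ℕ) (w : Polynomial S),
        Polynomial.C a ^ N * p = w * (Polynomial.C a * Polynomial.X + Polynomial.C b) := by
  intro k
  induction k with
  | zero =>
    intro p q hdeg heq
    by_cases hq : q = 0
    · refine ⟨0, 0, ?_⟩
      have hp : p.map τ = 0 := by rw [heq, hq, zero_mul]
      have : p = 0 := Polynomial.map_injective τ hτ (by rwa [Polynomial.map_zero])
      rw [this]; ring
    · exfalso
      set d := q.natDegree with hd
      have hco : (q * (Polynomial.C (τ a) * Polynomial.X + Polynomial.C (τ b))).coeff (d + 1)
          = τ a * q.leadingCoeff := by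
        have hrw : q * (Polynomial.C (τ a) * Polynomial.X + Polynomial.C (τ b))
            = Polynomial.C (τ a) * (q * Polynomial.X) + Polynomial.C (τ b) * q := by ring
        rw [hrw, Polynomial.coeff_add, Polynomial.coeff_C_mul, Polynomial.coeff_C_mul,
          Polynomial.coeff_mul_X,
          Polynomial.coeff_eq_zero_of_natDegree_lt (by omega : q.natDegree < d + 1)]
        rw [mul_zero, add_zero]
        rfl
      have hzero : (p.map τ).coeff (d + 1) = 0 := by
        rw [Polynomial.coeff_map,
          Polynomial.coeff_eq_zero_of_natDegree_lt (by omega : p.natDegree < d + 1),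
          map_zero]
      rw [heq, hco] at hzero
      rw [ha.mul_right_eq_zero] at hzero
      exact hq (Polynomial.leadingCoeff_eq_zero.mp hzero)
  | succ k ih =>
    intro p q hdeg heq
    set c := p.coeff (k + 1) with hc
    have hdeg1 : (Polynomial.C a * p - Polynomial.C c * Polynomial.X ^ k *
        (Polynomial.C a * Polynomial.X + Polynomial.C b)).natDegree ≤ k := by
      rw [Polynomial.natDegree_le_iff_coeff_eq_zero]
      intro j hj
      have hexp : Polynomial.C a * p - Polynomial.C c * Polynomial.X ^ k *
          (Polynomial.C a * Polynomial.X + Polynomial.C b)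
          = Polynomial.C a * p - (Polynomial.C (c * a) * Polynomial.X ^ (k + 1)
            + Polynomial.C (c * b) * Polynomial.X ^ k) := by
        rw [Polynomial.C_mul, Polynomial.C_mul]; ring
      rw [hexp, Polynomial.coeff_sub, Polynomial.coeff_add, Polynomial.coeff_C_mul,
        Polynomial.coeff_C_mul, Polynomial.coeff_C_mul, Polynomial.coeff_X_pow,
        Polynomial.coeff_X_pow]
      rcases eq_or_lt_of_le (Nat.succ_le_of_lt hj) with hjk | hjk
      · rw [← hjk]
        simp [hc, mul_comm]
      · rw [Polynomial.coeff_eq_zero_of_natDegree_lt (by omega : p.natDegree < j)]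
        rw [if_neg (by omega), if_neg (by omega)]
        ring
    have heq1 : (Polynomial.C a * p - Polynomial.C c * Polynomial.X ^ k *
        (Polynomial.C a * Polynomial.X + Polynomial.C b)).map τ
        = (Polynomial.C (τ a) * q - Polynomial.C (τ c) * Polynomial.X ^ k) *
          (Polynomial.C (τ a) * Polynomial.X + Polynomial.C (τ b)) := by
      rw [Polynomial.map_sub, Polynomial.map_mul, Polynomial.map_mul, Polynomial.map_mul,
        Polynomial.map_pow, Polynomial.map_add, Polynomial.map_mul]
      simp only [Polynomial.map_C, Polynomial.map_X]
      rw [heq]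
      ring
    obtain ⟨N, w, hw⟩ := ih _ _ hdeg1 heq1
    refine ⟨N + 1, w + Polynomial.C a ^ N * Polynomial.C c * Polynomial.X ^ k, ?_⟩
    linear_combination hw

end Div

/-! ### The equivalence `R[T_0,…,T_m] ≃ (R[T_{≠i}])[X]` and consequences -/

section Equivs

variable {R S : Type*} [CommRing R] [CommRing S] {m : ℕ}

/-- The composite equivalence `R[T_0..T_m] ≃ R[T_{≠i}][X]` swapping `i` to position `0`. -/
noncomputable def FA.E (R : Type*) [CommRing R] (m : ℕ) (i : Fin (m + 1)) :
    MvPolynomial (Fin (m + 1)) R ≃+* Polynomial (MvPolynomial (Fin m) R) :=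
  ((renameEquiv R (Equiv.swap i 0)).trans (finSuccEquiv R m)).toRingEquiv

lemma FA.E_apply (i : Fin (m + 1)) (p : MvPolynomial (Fin (m + 1)) R) :
    FA.E R m i p = finSuccEquiv R m (rename (Equiv.swap i 0) p) := rfl

lemma FA.E_C (i : Fin (m + 1)) (r : R) :
    FA.E R m i (C r) = Polynomial.C (C r) := by
  simp [FA.E_apply, finSuccEquiv_apply]

lemma FA.E_X_self (i : Fin (m + 1)) :
    FA.E R m i (X i) = Polynomial.X := by
  simp [FA.E_apply, Equiv.swap_apply_left, finSuccEquiv_X_zero]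

lemma FA.finSuccEquiv_natural (g : R →+* S) (p : MvPolynomial (Fin (m + 1)) R) :
    Polynomial.map (MvPolynomial.map g) (finSuccEquiv R m p)
      = finSuccEquiv S m (MvPolynomial.map g p) := by
  have key : (Polynomial.mapRingHom (MvPolynomial.map g)).comp
      (finSuccEquiv R m).toAlgHom.toRingHom
      = (finSuccEquiv S m).toAlgHom.toRingHom.comp (MvPolynomial.map g) := by
    apply MvPolynomial.ringHom_ext
    · intro r
      simp [finSuccEquiv_apply]
    · intro j
      refine Fin.cases ?_ (fun j' => ?_) j
      · simp [finSuccEquiv_X_zero]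
      · simp [finSuccEquiv_X_succ]
  exact RingHom.congr_fun key p

lemma FA.E_natural (g : R →+* S) (i : Fin (m + 1)) (p : MvPolynomial (Fin (m + 1)) R) :
    Polynomial.map (MvPolynomial.map g) (FA.E R m i p) = FA.E S m i (MvPolynomial.map g p) := by
  rw [FA.E_apply, FA.E_apply, FA.finSuccEquiv_natural, map_rename]

lemma FA.E_form (m : ℕ) (f : Fin (m + 1) → R) (f₀ : R) (i : Fin (m + 1)) :
    ∃ b : MvPolynomial (Fin m) R,
      FA.E R m i (forcingPoly R (m + 1) f f₀)
        = Polynomial.C (C (f i)) * Polynomial.X + Polynomial.C b := by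
  have hsplit : forcingPoly R (m + 1) f f₀
      = C (f i) * X i + ((∑ j ∈ Finset.univ.erase i, C (f j) * X j) + C f₀) := by
    rw [forcingPoly, ← Finset.add_sum_erase _ _ (Finset.mem_univ i)]
    ring
  have hrest : FA.E R m i ((∑ j ∈ Finset.univ.erase i, C (f j) * X j) + C f₀)
      ∈ Set.range (Polynomial.C : MvPolynomial (Fin m) R →+* _) := by
    rw [map_add, map_sum]
    refine Subring.add_mem _ (Subring.sum_mem (Polynomial.C : MvPolynomial (Fin m) R →+* _).range
      (fun j hj => ?_)) ?_
    · have hji : j ≠ i := Finset.ne_of_mem_erase hj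
      have hσ : Equiv.swap i 0 j ≠ 0 := by
        intro h0
        apply hji
        have := congrArg (Equiv.swap i 0) h0
        rwa [Equiv.swap_apply_self, Equiv.swap_apply_right] at this
      rw [map_mul, FA.E_C, FA.E_apply, rename_X, ← Fin.succ_pred (Equiv.swap i 0 j) hσ,
        finSuccEquiv_X_succ]
      exact ⟨C (f j) * X ((Equiv.swap i 0 j).pred hσ), by rw [map_mul]⟩
    · rw [FA.E_C]
      exact ⟨C f₀, rfl⟩
  obtain ⟨b, hb⟩ := hrest
  refine ⟨b, ?_⟩
  rw [hsplit, map_add, map_mul, FA.E_C, FA.E_X_self, hb]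

end Equivs

/-! ### Primality of the horizontal generator and clearing denominators -/

section Main
variable {R : Type*} [CommRing R] [IsDomain R] {m : ℕ}

lemma FA.unit_coeff (i : Fin (m + 1)) (f : Fin (m + 1) → R) (hi : f i ≠ 0) :
    IsUnit ((MvPolynomial.map (algebraMap R (FractionRing R)))
      (C (f i) : MvPolynomial (Fin m) R)) := by
  rw [MvPolynomial.map_C]
  refine IsUnit.map C (isUnit_iff_ne_zero.mpr fun h0 => hi ?_)
  exact IsFractionRing.injective R (FractionRing R) (by rw [h0, map_zero])

lemma FA.prime_h (m : ℕ) (f : Fin (m + 1) → R) (f₀ : R) (i : Fin (m + 1)) (hi : f i ≠ 0) :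
    Prime (MvPolynomial.map (algebraMap R (FractionRing R)) (forcingPoly R (m + 1) f f₀)) := by
  set K := FractionRing R
  obtain ⟨b, hb⟩ := FA.E_form m f f₀ i
  have hnat := FA.E_natural (algebraMap R K) i (forcingPoly R (m + 1) f f₀)
  rw [hb] at hnat
  have hL : Polynomial.map (MvPolynomial.map (algebraMap R K))
      (Polynomial.C (C (f i)) * Polynomial.X + Polynomial.C b)
      = Polynomial.C ((MvPolynomial.map (algebraMap R K)) (C (f i))) * Polynomial.X
        + Polynomial.C (MvPolynomial.map (algebraMap R K) b) := by
    simp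
  rw [hL] at hnat
  rw [← MulEquiv.prime_iff (FA.E K m i)]
  show Prime (FA.E K m i (MvPolynomial.map (algebraMap R K) (forcingPoly R (m + 1) f f₀)))
  rw [← hnat]
  set a' := (MvPolynomial.map (algebraMap R K)) (C (f i) : MvPolynomial (Fin m) R) with ha'def
  set b' := MvPolynomial.map (algebraMap R K) b with hb'def
  have ha : IsUnit a' := FA.unit_coeff i f hi
  have hkey : Polynomial.C a' * Polynomial.X + Polynomial.C b'
      = Polynomial.C a' * (Polynomial.X - Polynomial.C (-(↑ha.unit⁻¹ * b'))) := by
    have h1 : a' * (↑ha.unit⁻¹ * b') = b' := by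
      rw [← mul_assoc, IsUnit.mul_val_inv, one_mul]
    rw [map_neg, sub_neg_eq_add, mul_add, ← Polynomial.C_mul, h1]
  rw [hkey]
  have hprime : Prime (Polynomial.X - Polynomial.C (-(↑ha.unit⁻¹ * b'))) :=
    Polynomial.prime_X_sub_C _
  exact ((associated_unit_mul_left _ _ (ha.map Polynomial.C)).symm).prime hprime

set_option maxHeartbeats 1000000 in
lemma FA.clear (m : ℕ) (f : Fin (m + 1) → R) (f₀ : R) (i : Fin (m + 1)) (hi : f i ≠ 0)
    (p : MvPolynomial (Fin (m + 1)) R)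
    (hp : MvPolynomial.map (algebraMap R (FractionRing R)) p ∈
      Ideal.span {MvPolynomial.map (algebraMap R (FractionRing R)) (forcingPoly R (m + 1) f f₀)}) :
    ∃ (N : ℕ) (w : MvPolynomial (Fin (m + 1)) R),
      C (f i) ^ N * p = w * forcingPoly R (m + 1) f f₀ := by
  set K := FractionRing R
  obtain ⟨u, hu⟩ := Ideal.mem_span_singleton'.mp hp
  obtain ⟨b, hb⟩ := FA.E_form m f f₀ i
  have hEp : Polynomial.map (MvPolynomial.map (algebraMap R K)) (FA.E R m i p)
      = FA.E K m i u * (Polynomial.C ((MvPolynomial.map (algebraMap R K)) (C (f i))) *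
          Polynomial.X + Polynomial.C (MvPolynomial.map (algebraMap R K) b)) := by
    rw [FA.E_natural, ← hu, map_mul]
    congr 1
    rw [← FA.E_natural, hb]
    simp
    rfl
  have hinj : Function.Injective
      (MvPolynomial.map (algebraMap R K) : MvPolynomial (Fin m) R →+* MvPolynomial (Fin m) K) :=
    MvPolynomial.map_injective _ (IsFractionRing.injective R K)
  have ha : IsUnit ((MvPolynomial.map (algebraMap R K)) (C (f i) : MvPolynomial (Fin m) R)) :=
    FA.unit_coeff i f hi
  obtain ⟨N, w, hw⟩ := FA.div_lemma (MvPolynomial.map (algebraMap R K)) hinj ha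
    (FA.E R m i p).natDegree (FA.E R m i p) (FA.E K m i u) le_rfl hEp
  refine ⟨N, (FA.E R m i).symm w, ?_⟩
  apply (FA.E R m i).injective
  rw [map_mul, map_mul, map_pow, FA.E_C, RingEquiv.apply_symm_apply, hb]
  exact hw

end Main


set_option maxHeartbeats 2000000

/-- Corollary `connectedcomponentslocal`: Let `(R,𝔪)` be a local
noetherian domain, `f_1,…,f_n ∈ 𝔪` generating a nonzero ideal, `f₀ ∈ 𝔪`, `A` the forcing
algebra and `𝔭` the horizontal prime. Then `Spec A` is connected iff
`𝔭 + (f_1,…,f_n,f₀)R[T_1,…,T_n]` is not the unit ideal. -/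
theorem local_forcing_algebra_connected_iff
    (R : Type*) [CommRing R] [IsDomain R] [IsNoetherianRing R] [IsLocalRing R]
    (n : ℕ) (f : Fin n → R) (f₀ : R)
    (hfm : ∀ i, f i ∈ IsLocalRing.maximalIdeal R) (hf₀m : f₀ ∈ IsLocalRing.maximalIdeal R)
    (hf : ∃ i, f i ≠ 0) :
    ConnectedSpace (PrimeSpectrum (ForcingAlgebra R n f f₀)) ↔
      horizontalPrime R n f f₀ ⊔
          Ideal.map (C : R →+* MvPolynomial (Fin n) R)
            (Ideal.span (insert f₀ (Set.range f))) ≠ ⊤ := by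
  obtain ⟨i0, hi0⟩ := hf
  cases n with
  | zero => exact i0.elim0
  | succ m =>
  set K := FractionRing R with hK
  set B := MvPolynomial (Fin (m + 1)) R with hB
  set h := forcingPoly R (m + 1) f f₀ with hh
  set 𝔭 := horizontalPrime R (m + 1) f f₀ with h𝔭
  set J0 := Ideal.span (insert f₀ (Set.range f)) with hJ0
  set 𝔮 := Ideal.map (C : R →+* B) J0 with h𝔮
  set π := Ideal.Quotient.mk (Ideal.span {h}) with hπ
  -- basic properties
  have hprime_h : Prime (MvPolynomial.map (algebraMap R K) h) := FA.prime_h m f f₀ i0 hi0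
  haveI hspan_prime : (Ideal.span {MvPolynomial.map (algebraMap R K) h}).IsPrime :=
    (Ideal.span_singleton_prime hprime_h.ne_zero).mpr hprime_h
  haveI h𝔭prime : 𝔭.IsPrime := Ideal.IsPrime.comap _
  have hh𝔭 : h ∈ 𝔭 := Ideal.mem_comap.mpr (Ideal.subset_span rfl)
  have hJ0m : J0 ≤ IsLocalRing.maximalIdeal R :=
    Ideal.span_le.mpr (Set.insert_subset hf₀m (Set.range_subset_iff.mpr hfm))
  have hJ0top : J0 ≠ ⊤ := fun hJ =>
    (IsLocalRing.maximalIdeal.isMaximal R).ne_top (top_le_iff.mp (hJ ▸ hJ0m))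
  have hh𝔮 : h ∈ 𝔮 := by
    rw [hh, forcingPoly]
    refine Ideal.add_mem _ (Ideal.sum_mem _ fun j _ => Ideal.mul_mem_right _ _
      (Ideal.mem_map_of_mem _ (Ideal.subset_span (Set.mem_insert_iff.mpr
        (Or.inr ⟨j, rfl⟩))))) (Ideal.mem_map_of_mem _ (Ideal.subset_span (Set.mem_insert _ _)))
  have h𝔮top : 𝔮 ≠ ⊤ := by
    intro htop
    apply hJ0top
    rw [Ideal.eq_top_iff_one]
    have hle : 𝔮 ≤ J0.comap (constantCoeff : B →+* R) :=
      Ideal.map_le_iff_le_comap.mpr (fun r hr => by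
        rw [Ideal.mem_comap]; simpa using hr)
    have h1 : (1 : B) ∈ 𝔮 := htop ▸ Submodule.mem_top
    simpa using hle h1
  have hspan_le_𝔮 : Ideal.span {h} ≤ 𝔮 := Ideal.span_le.mpr (Set.singleton_subset_iff.mpr hh𝔮)
  have hspan_ne_top : Ideal.span {h} ≠ ⊤ := fun e => h𝔮top (top_le_iff.mp (e ▸ hspan_le_𝔮))
  haveI : Nontrivial (B ⧸ Ideal.span {h}) := Ideal.Quotient.nontrivial_iff.mpr hspan_ne_top
  -- the covering by the two closed sets
  have hcov : ∀ x : PrimeSpectrum (ForcingAlgebra R (m + 1) f f₀),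
      x ∈ PrimeSpectrum.zeroLocus (↑(𝔭.map π)) ∪ PrimeSpectrum.zeroLocus (↑(𝔮.map π)) := by
    intro x
    haveI hPp : (x.asIdeal.comap π).IsPrime := Ideal.IsPrime.comap π
    have hhP : h ∈ x.asIdeal.comap π := by
      rw [Ideal.mem_comap,
        show π h = 0 from Ideal.Quotient.eq_zero_iff_mem.mpr (Ideal.subset_span rfl)]
      exact x.asIdeal.zero_mem
    by_cases hq : 𝔮 ≤ x.asIdeal.comap π
    · right
      rw [PrimeSpectrum.mem_zeroLocus]
      exact fun y hy => (Ideal.map_le_iff_le_comap.mpr hq) hy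
    · left
      rw [PrimeSpectrum.mem_zeroLocus]
      have hCi : ∃ i1 : Fin (m + 1), C (f i1) ∉ x.asIdeal.comap π := by
        by_contra hall
        push_neg at hall
        apply hq
        have hsum : (∑ j : Fin (m + 1), C (f j) * X j) ∈ x.asIdeal.comap π :=
          Ideal.sum_mem _ fun j _ => Ideal.mul_mem_right _ _ (hall j)
        have hCf₀ : (C f₀ : B) ∈ x.asIdeal.comap π := by
          have hrw : (C f₀ : B) = h - ∑ j, C (f j) * X j := by rw [hh, forcingPoly]; ring
          rw [hrw]; exact Ideal.sub_mem _ hhP hsum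
        rw [h𝔮, Ideal.map_le_iff_le_comap, hJ0, Ideal.span_le]
        intro r hr
        rw [SetLike.mem_coe, Ideal.mem_comap]
        rcases Set.mem_insert_iff.mp hr with rfl | ⟨j, rfl⟩
        · exact hCf₀
        · exact hall j
      obtain ⟨i1, hi1⟩ := hCi
      have hfi1 : f i1 ≠ 0 := fun h0 => hi1 (by
        rw [Ideal.mem_comap, h0, map_zero, map_zero]; exact x.asIdeal.zero_mem)
      have hle𝔭 : 𝔭 ≤ x.asIdeal.comap π := by
        intro p hp
        obtain ⟨N, w, hNw⟩ := FA.clear m f f₀ i1 hfi1 p (Ideal.mem_comap.mp hp)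
        have hmem : C (f i1) ^ N * p ∈ x.asIdeal.comap π := by
          rw [hNw]; exact Ideal.mul_mem_left _ _ hhP
        rcases hPp.mem_or_mem hmem with hc | hc
        · exact absurd (hPp.mem_of_pow_mem _ hc) hi1
        · exact hc
      exact fun y hy => (Ideal.map_le_iff_le_comap.mpr hle𝔭) hy
  -- Z1 is irreducible, hence preconnected
  haveI hZ1prime : (𝔭.map π).IsPrime :=
    Ideal.map_isPrime_of_surjective Ideal.Quotient.mk_surjective
      (by rw [Ideal.mk_ker]; exact Ideal.span_le.mpr (Set.singleton_subset_iff.mpr hh𝔭))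
  let x1 : PrimeSpectrum (ForcingAlgebra R (m + 1) f f₀) := ⟨𝔭.map π, hZ1prime⟩
  have hZ1closure : PrimeSpectrum.zeroLocus (↑(𝔭.map π)) = closure {x1} :=
    (PrimeSpectrum.closure_singleton x1).symm
  have hZ1conn : IsPreconnected (PrimeSpectrum.zeroLocus
      (↑(𝔭.map π) : Set (ForcingAlgebra R (m + 1) f f₀))) := by
    rw [hZ1closure]
    exact (isIrreducible_singleton.closure).2.isPreconnected
  have hx1Z1 : x1 ∈ PrimeSpectrum.zeroLocus (↑(𝔭.map π)) := by
    rw [hZ1closure]; exact subset_closure rfl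
  -- Z2 is the image of a preconnected spectrum
  haveI : Nontrivial (R ⧸ J0) := Ideal.Quotient.nontrivial_iff.mpr hJ0top
  haveI : IsLocalRing (R ⧸ J0) := IsLocalRing.of_surjective' _ Ideal.Quotient.mk_surjective
  have hρsurj : Function.Surjective
      (MvPolynomial.map (Ideal.Quotient.mk J0) : B →+* MvPolynomial (Fin (m + 1)) (R ⧸ J0)) :=
    MvPolynomial.map_surjective _ Ideal.Quotient.mk_surjective
  have hkerρ : RingHom.ker (MvPolynomial.map (Ideal.Quotient.mk J0) : B →+* _) = 𝔮 := by
    rw [MvPolynomial.ker_map, Ideal.mk_ker]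
  have hleker : Ideal.span {h} ≤
      RingHom.ker (MvPolynomial.map (Ideal.Quotient.mk J0) : B →+* _) := by
    rw [hkerρ]; exact hspan_le_𝔮
  set ρ' := Ideal.Quotient.lift (Ideal.span {h})
    (MvPolynomial.map (Ideal.Quotient.mk J0) : B →+* _)
    (fun a ha => RingHom.mem_ker.mp (hleker ha)) with hρ'
  have hρ'surj : Function.Surjective ρ' := by
    intro y
    obtain ⟨x, hx⟩ := hρsurj y
    exact ⟨π x, by rw [hρ', Ideal.Quotient.lift_mk]; exact hx⟩
  have hkerρ' : RingHom.ker ρ' = 𝔮.map π := by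
    rw [hρ']; exact (Ideal.ker_quotient_lift _ _).trans (by rw [hkerρ])
  have hZ2range : Set.range (PrimeSpectrum.comap ρ')
      = PrimeSpectrum.zeroLocus (↑(𝔮.map π)) := by
    rw [range_comap_of_surjective _ _ hρ'surj, hkerρ']
  haveI : PreconnectedSpace (PrimeSpectrum (MvPolynomial (Fin (m + 1)) (R ⧸ J0))) :=
    FA.preconn_spec _ (FA.mv_idem _ (FA.local_idem _))
  have hZ2conn : IsPreconnected (PrimeSpectrum.zeroLocus
      (↑(𝔮.map π) : Set (ForcingAlgebra R (m + 1) f f₀))) := by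
    rw [← hZ2range]
    exact isPreconnected_range (PrimeSpectrum.continuous_comap ρ')
  have hZ2ne : (PrimeSpectrum.zeroLocus
      (↑(𝔮.map π) : Set (ForcingAlgebra R (m + 1) f f₀))).Nonempty := by
    rw [← hZ2range]
    exact Set.range_nonempty _
  constructor
  · intro hconn hsum
    have hdisj : PrimeSpectrum.zeroLocus (↑(𝔭.map π)) ∩
        PrimeSpectrum.zeroLocus (↑(𝔮.map π)) = (∅ : Set (PrimeSpectrum (ForcingAlgebra R (m + 1) f f₀))) := by
      rw [Set.eq_empty_iff_forall_notMem]
      rintro x ⟨h1, h2⟩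
      rw [PrimeSpectrum.mem_zeroLocus] at h1 h2
      haveI hPp : (x.asIdeal.comap π).IsPrime := Ideal.IsPrime.comap π
      have e1 : 𝔭 ≤ x.asIdeal.comap π :=
        Ideal.map_le_iff_le_comap.mp (fun y hy => h1 hy)
      have e2 : 𝔮 ≤ x.asIdeal.comap π :=
        Ideal.map_le_iff_le_comap.mp (fun y hy => h2 hy)
      exact hPp.ne_top (top_le_iff.mp (hsum ▸ sup_le e1 e2))
    have hcompl : (PrimeSpectrum.zeroLocus
        (↑(𝔭.map π) : Set (ForcingAlgebra R (m + 1) f f₀)))ᶜ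
        = PrimeSpectrum.zeroLocus (↑(𝔮.map π)) := by
      apply Set.Subset.antisymm
      · intro x hx
        rcases hcov x with h1 | h2
        · exact absurd h1 hx
        · exact h2
      · intro x hx hx1
        exact Set.eq_empty_iff_forall_notMem.mp hdisj x ⟨hx1, hx⟩
    have hccl : IsClosed (PrimeSpectrum.zeroLocus
        (↑(𝔭.map π) : Set (ForcingAlgebra R (m + 1) f f₀)))ᶜ := by
      rw [hcompl]; exact PrimeSpectrum.isClosed_zeroLocus _
    have hclopen : IsClopen (PrimeSpectrum.zeroLocus
        (↑(𝔭.map π) : Set (ForcingAlgebra R (m + 1) f f₀))) :=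
      ⟨PrimeSpectrum.isClosed_zeroLocus _, isClosed_compl_iff.mp hccl⟩
    rcases isClopen_iff.mp hclopen with he | hu
    · exact Set.eq_empty_iff_forall_notMem.mp he x1 hx1Z1
    · obtain ⟨y, hy⟩ := hZ2ne
      have hy1 : y ∈ PrimeSpectrum.zeroLocus (↑(𝔭.map π)) := hu ▸ Set.mem_univ y
      exact Set.eq_empty_iff_forall_notMem.mp hdisj y ⟨hy1, hy⟩
  · intro hsum
    obtain ⟨M, hMmax, hM⟩ := Ideal.exists_le_maximal _ hsum
    haveI : M.IsPrime := hMmax.isPrime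
    have h𝔭M : 𝔭 ≤ M := le_sup_left.trans hM
    have h𝔮M : 𝔮 ≤ M := le_sup_right.trans hM
    have hhM : Ideal.span {h} ≤ M := hspan_le_𝔮.trans h𝔮M
    haveI : (M.map π).IsPrime :=
      Ideal.map_isPrime_of_surjective Ideal.Quotient.mk_surjective
        (by rw [Ideal.mk_ker]; exact hhM)
    set xM : PrimeSpectrum (ForcingAlgebra R (m + 1) f f₀) := ⟨M.map π, this⟩ with hxM
    have hxM1 : xM ∈ PrimeSpectrum.zeroLocus (↑(𝔭.map π)) := by
      rw [PrimeSpectrum.mem_zeroLocus]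
      exact fun y hy => (Ideal.map_mono h𝔭M) hy
    have hxM2 : xM ∈ PrimeSpectrum.zeroLocus (↑(𝔮.map π)) := by
      rw [PrimeSpectrum.mem_zeroLocus]
      exact fun y hy => (Ideal.map_mono h𝔮M) hy
    have huniv : (Set.univ : Set (PrimeSpectrum (ForcingAlgebra R (m + 1) f f₀)))
        = PrimeSpectrum.zeroLocus (↑(𝔭.map π)) ∪ PrimeSpectrum.zeroLocus (↑(𝔮.map π)) :=
      (Set.eq_univ_iff_forall.mpr hcov).symm
    have hpre : PreconnectedSpace (PrimeSpectrum (ForcingAlgebra R (m + 1) f f₀)) := by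
      constructor
      rw [huniv]
      exact IsPreconnected.union xM hxM1 hxM2 hZ1conn hZ2conn
    exact { toPreconnectedSpace := hpre, toNonempty := inferInstance }
end
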